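/- For any bivectors H, K on ℝⁿ and any smooth vector field τ on ℝⁿ, the Lie derivative acts as a derivation of the Schouten bracket: L_τ([H,K]) = [L_τ(H), K] + [H, L_τ(K)], where the Lie derivative of a trivector field T along τ has components (L_τT)^{ijk} = Σ_{m=1}^{n} ( τ^m ∂T^{ijk}/∂x^m − T^{mjk} ∂τ^i/∂x^m − T^{imk} ∂τ^j/∂x^m − T^{ijm} ∂τ^k/∂x^m ). -/

import Mathlib

open Matrix BigOperators

noncomputable section

/-- Partial derivative of a scalar function on ℝⁿ in the `k`-th coordinate direction. -/
def pd {n : ℕ} (k : Fin n) (f : (Fin n → ℝ) → ℝ) (x : Fin n → ℝ) : ℝ :=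
  fderiv ℝ f x (Pi.single k 1)

/-- A (smooth) bivector on ℝⁿ: a smooth field of antisymmetric matrices. -/
def IsBivector {n : ℕ} (P : (Fin n → ℝ) → Matrix (Fin n) (Fin n) ℝ) : Prop :=
  (∀ i j, ContDiff ℝ (⊤ : ℕ∞) fun x => P x i j) ∧ ∀ x, (P x)ᵀ = -P x

/-- A smooth vector field on ℝⁿ. -/
def IsVectorField {n : ℕ} (τ : (Fin n → ℝ) → (Fin n → ℝ)) : Prop :=
  ∀ i, ContDiff ℝ (⊤ : ℕ∞) fun x => τ x i

/-- Components of the Schouten bracket of two bivectors: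
`[H,K]^{ijk} = -∑ₘ (K^{mk} ∂ₘH^{ij} + H^{mk} ∂ₘK^{ij} + cyclic permutations of (i,j,k))`. -/
def schouten {n : ℕ} (H K : (Fin n → ℝ) → Matrix (Fin n) (Fin n) ℝ)
    (x : Fin n → ℝ) (i j k : Fin n) : ℝ :=
  -∑ m, (K x m k * pd m (fun y => H y i j) x + H x m k * pd m (fun y => K y i j) x
       + K x m i * pd m (fun y => H y j k) x + H x m i * pd m (fun y => K y j k) x
       + K x m j * pd m (fun y => H y k i) x + H x m j * pd m (fun y => K y k i) x)

/-- Lie derivative of a bivector along a vector field: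
`(L_τ P)^{ij} = ∑ₖ (τ^k ∂ₖP^{ij} - P^{kj} ∂ₖτ^i - P^{ik} ∂ₖτ^j)`. -/
def lieD {n : ℕ} (τ : (Fin n → ℝ) → (Fin n → ℝ))
    (P : (Fin n → ℝ) → Matrix (Fin n) (Fin n) ℝ)
    (x : Fin n → ℝ) : Matrix (Fin n) (Fin n) ℝ :=
  Matrix.of fun i j => ∑ k, (τ x k * pd k (fun y => P y i j) x
    - P x k j * pd k (fun y => τ y i) x - P x i k * pd k (fun y => τ y j) x)

/-- A Poisson bivector: a bivector whose Schouten bracket with itself vanishes. -/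
def IsPoisson {n : ℕ} (P : (Fin n → ℝ) → Matrix (Fin n) (Fin n) ℝ) : Prop :=
  IsBivector P ∧ ∀ x i j k, schouten P P x i j k = 0

/-- Two bivectors are compatible if their Schouten bracket vanishes. -/
def Compatible {n : ℕ} (P Q : (Fin n → ℝ) → Matrix (Fin n) (Fin n) ℝ) : Prop :=
  ∀ x i j k, schouten P Q x i j k = 0

/-- Lie derivative of a trivector field along a vector field:
`(L_τ T)^{ijk} = ∑ₘ (τ^m ∂ₘT^{ijk} − T^{mjk} ∂ₘτ^i − T^{imk} ∂ₘτ^j − T^{ijm} ∂ₘτ^k)`. -/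
def lieD3 {n : ℕ} (τ : (Fin n → ℝ) → (Fin n → ℝ))
    (T : (Fin n → ℝ) → Fin n → Fin n → Fin n → ℝ)
    (x : Fin n → ℝ) (i j k : Fin n) : ℝ :=
  ∑ m, (τ x m * pd m (fun y => T y i j k) x
    - T x m j k * pd m (fun y => τ y i) x
    - T x i m k * pd m (fun y => τ y j) x
    - T x i j m * pd m (fun y => τ y k) x)

section Helpers

variable {n : ℕ}

theorem pd_add {f g : (Fin n → ℝ) → ℝ} {x : Fin n → ℝ} (k : Fin n)
    (hf : DifferentiableAt ℝ f x) (hg : DifferentiableAt ℝ g x) :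
    pd k (fun y => f y + g y) x = pd k f x + pd k g x := by
  simp [pd, fderiv_fun_add hf hg]

theorem pd_neg {f : (Fin n → ℝ) → ℝ} {x : Fin n → ℝ} (k : Fin n) :
    pd k (fun y => -f y) x = -pd k f x := by
  simp [pd, fderiv_neg]

theorem pd_sub {f g : (Fin n → ℝ) → ℝ} {x : Fin n → ℝ} (k : Fin n)
    (hf : DifferentiableAt ℝ f x) (hg : DifferentiableAt ℝ g x) :
    pd k (fun y => f y - g y) x = pd k f x - pd k g x := by
  simp [pd, fderiv_fun_sub hf hg]

theorem pd_mul {f g : (Fin n → ℝ) → ℝ} {x : Fin n → ℝ} (k : Fin n)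
    (hf : DifferentiableAt ℝ f x) (hg : DifferentiableAt ℝ g x) :
    pd k (fun y => f y * g y) x = pd k f x * g x + f x * pd k g x := by
  simp [pd, fderiv_fun_mul hf hg]; ring

theorem pd_sum {ι : Type*} {s : Finset ι} {f : ι → (Fin n → ℝ) → ℝ} {x : Fin n → ℝ} (k : Fin n)
    (hf : ∀ i ∈ s, DifferentiableAt ℝ (f i) x) :
    pd k (fun y => ∑ i ∈ s, f i y) x = ∑ i ∈ s, pd k (f i) x := by
  simp [pd, fderiv_fun_sum hf]

theorem pd_smooth {f : (Fin n → ℝ) → ℝ} (hf : ContDiff ℝ (⊤:ℕ∞) f) (k : Fin n) :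
    ContDiff ℝ (⊤:ℕ∞) (pd k f) :=
  ((hf.fderiv_right (m := (⊤:ℕ∞)) (by exact_mod_cast le_top)).clm_apply contDiff_const)

theorem pd_comm {f : (Fin n → ℝ) → ℝ} (hf : ContDiff ℝ (⊤:ℕ∞) f) (m l : Fin n) (x : Fin n → ℝ) :
    pd m (pd l f) x = pd l (pd m f) x := by
  have hdf : ContDiff ℝ (⊤:ℕ∞) (fderiv ℝ f) :=
    hf.fderiv_right (m := (⊤:ℕ∞)) (by exact_mod_cast le_top)
  have h1 : ∀ d : Fin n, ∀ v : Fin n → ℝ, pd d (fun y => fderiv ℝ f y v) x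
      = fderiv ℝ (fderiv ℝ f) x (Pi.single d 1) v := by
    intro d v
    unfold pd
    rw [fderiv_clm_apply (hdf.differentiable (by simp) x)
      (differentiableAt_const v)]
    simp
  have hsymm := second_derivative_symmetric
    (f' := fderiv ℝ f) (f'' := fderiv ℝ (fderiv ℝ f) x) (f := f)
    (fun y => (hf.differentiable (by simp) y).hasFDerivAt)
    ((hdf.differentiable (by simp) x).hasFDerivAt)
    (Pi.single m 1) (Pi.single l 1)
  show pd m (fun y => fderiv ℝ f y (Pi.single l 1)) x
      = pd l (fun y => fderiv ℝ f y (Pi.single m 1)) x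
  rw [h1, h1, hsymm]

theorem key_swap (F G : Fin n → Fin n → ℝ)
    (h : ∀ m l, F m l + F l m = G m l + G l m) :
    ∑ m, ∑ l, F m l = ∑ m, ∑ l, G m l := by
  have h1 : ∑ m, ∑ l, (F m l + F l m) = ∑ m, ∑ l, (G m l + G l m) :=
    Finset.sum_congr rfl fun m _ => Finset.sum_congr rfl fun l _ => h m l
  have e : ∀ P : Fin n → Fin n → ℝ, ∑ m, ∑ l, (P m l + P l m) = 2 * ∑ m, ∑ l, P m l := by
    intro P
    have e1 : ∑ m, ∑ l, (P m l + P l m)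
        = (∑ m, ∑ l, P m l) + ∑ m, ∑ l, P l m := by
      simp [Finset.sum_add_distrib]
    have e2 : ∑ m, ∑ l, P l m = ∑ m, ∑ l, P m l := Finset.sum_comm
    rw [e1, e2]; ring
  rw [e F, e G] at h1
  linarith

theorem pd_schouten {H K : (Fin n → ℝ) → Matrix (Fin n) (Fin n) ℝ}
    (hH : ∀ i j, ContDiff ℝ (⊤:ℕ∞) fun x => H x i j)
    (hK : ∀ i j, ContDiff ℝ (⊤:ℕ∞) fun x => K x i j)
    (x : Fin n → ℝ) (a b c m : Fin n) :
    pd m (fun y => schouten H K y a b c) x =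
    -∑ l, (pd m (fun y => K y l c) x * pd l (fun y => H y a b) x
         + K x l c * pd m (pd l (fun y => H y a b)) x
         + pd m (fun y => H y l c) x * pd l (fun y => K y a b) x
         + H x l c * pd m (pd l (fun y => K y a b)) x
         + pd m (fun y => K y l a) x * pd l (fun y => H y b c) x
         + K x l a * pd m (pd l (fun y => H y b c)) x
         + pd m (fun y => H y l a) x * pd l (fun y => K y b c) x
         + H x l a * pd m (pd l (fun y => K y b c)) x
         + pd m (fun y => K y l b) x * pd l (fun y => H y c a) x
         + K x l b * pd m (pd l (fun y => H y c a)) x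
         + pd m (fun y => H y l b) x * pd l (fun y => K y c a) x
         + H x l b * pd m (pd l (fun y => K y c a)) x) := by
  have h1 : ∀ a b, Differentiable ℝ (fun x => H x a b) :=
    fun a b => (hH a b).differentiable (by simp)
  have h1' : ∀ a b, Differentiable ℝ (fun x => K x a b) :=
    fun a b => (hK a b).differentiable (by simp)
  have h2 : ∀ l a b, Differentiable ℝ (pd l fun z => H z a b) :=
    fun l a b => (pd_smooth (hH a b) l).differentiable (by simp)
  have h2' : ∀ l a b, Differentiable ℝ (pd l fun z => K z a b) :=
    fun l a b => (pd_smooth (hK a b) l).differentiable (by simp)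
  simp only [schouten]
  rw [pd_neg]
  rw [pd_sum _ (fun l _ => by fun_prop)]
  congr 1
  refine Finset.sum_congr rfl fun l _ => ?_
  simp (disch := fun_prop) only [pd_add, pd_mul]
  ring

theorem pd_lieD {P : (Fin n → ℝ) → Matrix (Fin n) (Fin n) ℝ}
    {τ : (Fin n → ℝ) → (Fin n → ℝ)}
    (hP : ∀ i j, ContDiff ℝ (⊤:ℕ∞) fun x => P x i j)
    (hτ : ∀ i, ContDiff ℝ (⊤:ℕ∞) fun x => τ x i)
    (x : Fin n → ℝ) (a b m : Fin n) :
    pd m (fun y => lieD τ P y a b) x =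
    ∑ l, (pd m (fun y => τ y l) x * pd l (fun y => P y a b) x
        + τ x l * pd m (pd l (fun y => P y a b)) x
        - (pd m (fun y => P y l b) x * pd l (fun y => τ y a) x
          + P x l b * pd m (pd l (fun y => τ y a)) x)
        - (pd m (fun y => P y a l) x * pd l (fun y => τ y b) x
          + P x a l * pd m (pd l (fun y => τ y b)) x)) := by
  have h1 : ∀ a b, Differentiable ℝ (fun x => P x a b) :=
    fun a b => (hP a b).differentiable (by simp)
  have h2 : ∀ l a b, Differentiable ℝ (pd l fun z => P z a b) :=
    fun l a b => (pd_smooth (hP a b) l).differentiable (by simp)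
  have h3 : ∀ a, Differentiable ℝ (fun x => τ x a) :=
    fun a => (hτ a).differentiable (by simp)
  have h4 : ∀ l a, Differentiable ℝ (pd l fun z => τ z a) :=
    fun l a => (pd_smooth (hτ a) l).differentiable (by simp)
  simp only [lieD, Matrix.of_apply]
  rw [pd_sum _ (fun l _ => by fun_prop)]
  refine Finset.sum_congr rfl fun l _ => ?_
  simp (disch := fun_prop) only [pd_sub, pd_add, pd_mul]
  try ring

end Helpers

/-- the Lie derivative is a derivation of the Schouten bracket:
`L_τ([H,K]) = [L_τ(H), K] + [H, L_τ(K)]`. -/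
theorem lie_deriv_schouten {n : ℕ} (hn : 1 ≤ n)
    (H K : (Fin n → ℝ) → Matrix (Fin n) (Fin n) ℝ)
    (hH : IsBivector H) (hK : IsBivector K)
    (τ : (Fin n → ℝ) → (Fin n → ℝ)) (hτ : IsVectorField τ) :
    ∀ x i j k, lieD3 τ (fun y => schouten H K y) x i j k
      = schouten (lieD τ H) K x i j k + schouten H (lieD τ K) x i j k := by
  intro x i j k
  have HaF : ∀ (y : Fin n → ℝ) a b, H y a b = -H y b a := fun y a b => by
    have h := congrFun (congrFun (hH.2 y) b) a
    simpa using h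
  have KaF : ∀ (y : Fin n → ℝ) a b, K y a b = -K y b a := fun y a b => by
    have h := congrFun (congrFun (hK.2 y) b) a
    simpa using h
  have Ha : ∀ a b, H x a b = -H x b a := fun a b => HaF x a b
  have Ka : ∀ a b, K x a b = -K x b a := fun a b => KaF x a b
  have pdHa : ∀ d a b, pd d (fun y => H y a b) x = -pd d (fun y => H y b a) x := by
    intro d a b
    have hf : (fun y => H y a b) = fun y => -(H y b a) := funext fun y => HaF y a b
    rw [hf, pd_neg]
  have pdKa : ∀ d a b, pd d (fun y => K y a b) x = -pd d (fun y => K y b a) x := by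
    intro d a b
    have hf : (fun y => K y a b) = fun y => -(K y b a) := funext fun y => KaF y a b
    rw [hf, pd_neg]
  have pdpdHa : ∀ d e a b, pd d (pd e (fun y => H y a b)) x
      = -pd d (pd e (fun y => H y b a)) x := by
    intro d e a b
    have hf : (fun y => H y a b) = fun y => -(H y b a) := funext fun y => HaF y a b
    rw [hf]
    have h2 : pd e (fun y => -(H y b a)) = fun z => -(pd e (fun y => H y b a) z) :=
      funext fun z => pd_neg e
    rw [h2, pd_neg]
  have pdpdKa : ∀ d e a b, pd d (pd e (fun y => K y a b)) x
      = -pd d (pd e (fun y => K y b a)) x := by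
    intro d e a b
    have hf : (fun y => K y a b) = fun y => -(K y b a) := funext fun y => KaF y a b
    rw [hf]
    have h2 : pd e (fun y => -(K y b a)) = fun z => -(pd e (fun y => K y b a) z) :=
      funext fun z => pd_neg e
    rw [h2, pd_neg]
  have pdpdHc : ∀ d e a b, pd d (pd e (fun y => H y a b)) x
      = pd e (pd d (fun y => H y a b)) x := fun d e a b => pd_comm (hH.1 a b) d e x
  have pdpdKc : ∀ d e a b, pd d (pd e (fun y => K y a b)) x
      = pd e (pd d (fun y => K y a b)) x := fun d e a b => pd_comm (hK.1 a b) d e x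
  have pdpdtc : ∀ d e a, pd d (pd e (fun y => τ y a)) x
      = pd e (pd d (fun y => τ y a)) x := fun d e a => pd_comm (hτ a) d e x
  simp only [lieD3]
  simp only [pd_schouten hH.1 hK.1]
  simp only [schouten]
  simp only [pd_lieD hH.1 hτ, pd_lieD hK.1 hτ]
  simp only [lieD, Matrix.of_apply]
  simp only [mul_neg, neg_mul, sub_neg_eq_add, neg_neg, Finset.mul_sum, Finset.sum_mul,
    ← Finset.sum_neg_distrib, ← Finset.sum_add_distrib, ← Finset.sum_sub_distrib]
  refine key_swap _ _ fun m l => ?_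
  simp only [Ha j i,
    Ka j i,
    Ha k i,
    Ka k i,
    Ha m i,
    Ka m i,
    Ha l i,
    Ka l i,
    Ha k j,
    Ka k j,
    Ha m j,
    Ka m j,
    Ha l j,
    Ka l j,
    Ha m k,
    Ka m k,
    Ha l k,
    Ka l k,
    Ha l m,
    Ka l m,
    pdHa i j i,
    pdKa i j i,
    pdHa i k i,
    pdKa i k i,
    pdHa i m i,
    pdKa i m i,
    pdHa i l i,
    pdKa i l i,
    pdHa i k j,
    pdKa i k j,
    pdHa i m j,
    pdKa i m j,
    pdHa i l j,
    pdKa i l j,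
    pdHa i m k,
    pdKa i m k,
    pdHa i l k,
    pdKa i l k,
    pdHa i l m,
    pdKa i l m,
    pdHa j j i,
    pdKa j j i,
    pdHa j k i,
    pdKa j k i,
    pdHa j m i,
    pdKa j m i,
    pdHa j l i,
    pdKa j l i,
    pdHa j k j,
    pdKa j k j,
    pdHa j m j,
    pdKa j m j,
    pdHa j l j,
    pdKa j l j,
    pdHa j m k,
    pdKa j m k,
    pdHa j l k,
    pdKa j l k,
    pdHa j l m,
    pdKa j l m,
    pdHa k j i,
    pdKa k j i,
    pdHa k k i,
    pdKa k k i,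
    pdHa k m i,
    pdKa k m i,
    pdHa k l i,
    pdKa k l i,
    pdHa k k j,
    pdKa k k j,
    pdHa k m j,
    pdKa k m j,
    pdHa k l j,
    pdKa k l j,
    pdHa k m k,
    pdKa k m k,
    pdHa k l k,
    pdKa k l k,
    pdHa k l m,
    pdKa k l m,
    pdHa m j i,
    pdKa m j i,
    pdHa m k i,
    pdKa m k i,
    pdHa m m i,
    pdKa m m i,
    pdHa m l i,
    pdKa m l i,
    pdHa m k j,
    pdKa m k j,
    pdHa m m j,
    pdKa m m j,
    pdHa m l j,
    pdKa m l j,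
    pdHa m m k,
    pdKa m m k,
    pdHa m l k,
    pdKa m l k,
    pdHa m l m,
    pdKa m l m,
    pdHa l j i,
    pdKa l j i,
    pdHa l k i,
    pdKa l k i,
    pdHa l m i,
    pdKa l m i,
    pdHa l l i,
    pdKa l l i,
    pdHa l k j,
    pdKa l k j,
    pdHa l m j,
    pdKa l m j,
    pdHa l l j,
    pdKa l l j,
    pdHa l m k,
    pdKa l m k,
    pdHa l l k,
    pdKa l l k,
    pdHa l l m,
    pdKa l l m,
    pdpdHa m l j i,
    pdpdKa m l j i,
    pdpdHa m l k i,
    pdpdKa m l k i,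
    pdpdHa m l m i,
    pdpdKa m l m i,
    pdpdHa m l l i,
    pdpdKa m l l i,
    pdpdHa m l k j,
    pdpdKa m l k j,
    pdpdHa m l m j,
    pdpdKa m l m j,
    pdpdHa m l l j,
    pdpdKa m l l j,
    pdpdHa m l m k,
    pdpdKa m l m k,
    pdpdHa m l l k,
    pdpdKa m l l k,
    pdpdHa m l l m,
    pdpdKa m l l m,
    pdpdHa l m j i,
    pdpdKa l m j i,
    pdpdHa l m k i,
    pdpdKa l m k i,
    pdpdHa l m m i,
    pdpdKa l m m i,
    pdpdHa l m l i,
    pdpdKa l m l i,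
    pdpdHa l m k j,
    pdpdKa l m k j,
    pdpdHa l m m j,
    pdpdKa l m m j,
    pdpdHa l m l j,
    pdpdKa l m l j,
    pdpdHa l m m k,
    pdpdKa l m m k,
    pdpdHa l m l k,
    pdpdKa l m l k,
    pdpdHa l m l m,
    pdpdKa l m l m,
    pdpdHc l m i j,
    pdpdKc l m i j,
    pdpdHc l m i k,
    pdpdKc l m i k,
    pdpdHc l m i m,
    pdpdKc l m i m,
    pdpdHc l m i l,
    pdpdKc l m i l,
    pdpdHc l m j k,
    pdpdKc l m j k,
    pdpdHc l m j m,
    pdpdKc l m j m,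
    pdpdHc l m j l,
    pdpdKc l m j l,
    pdpdHc l m k m,
    pdpdKc l m k m,
    pdpdHc l m k l,
    pdpdKc l m k l,
    pdpdHc l m m l,
    pdpdKc l m m l,
    pdpdtc l m i,
    pdpdtc l m j,
    pdpdtc l m k,
    pdpdtc l m m,
    pdpdtc l m l]
  ring
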